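/- arXiv:math/0406337 — 6 statements merged into one kernel-verified Lean document; each statement's English description precedes it below -/
import Mathlib

section
/- For every natural number k, the identity ∑_{n=0}^{k} 1/(k-n+1/2) · ∑_{m=0}^{n} 1/(m+1/2) = 2 ∑_{n=0}^{k} 1/(n+1) · ∑_{m=0}^{n} 1/(m+1/2) holds (all sums taken in the real numbers). -/
/-!
With `a m = 1 / (m + 1/2)`, reversing the outer index turns the left side into the sum of
`a i * a j` over `i + j ≤ k`. On the diagonal `i + j = s` the partial fraction
`a i * a j = (a i + a j) / (s + 1)` and the symmetry `i ↔ j` give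
`∑_{i+j=s} a i * a j = 2 / (s + 1) * ∑_{m ≤ s} a m`, which is the summand on the right.
-/

open Finset

theorem sum_range_reflect_mul_sum_range_eq_sum_diag {R : Type*} [CommSemiring R]
    (f g : ℕ → R) (k : ℕ) :
    ∑ n ∈ range (k + 1), f (k - n) * ∑ m ∈ range (n + 1), g m =
      ∑ s ∈ range (k + 1), ∑ j ∈ range (s + 1), f j * g (s - j) := by
  rw [sum_range_diag_flip (k + 1) fun i j ↦ f i * g j]
  conv_rhs => rw [← sum_range_reflect]
  refine sum_congr rfl fun n hn ↦ ?_
  have hnk := mem_range_succ_iff.mp hn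
  rw [mul_sum, Nat.add_sub_cancel, show k + 1 - (k - n) = n + 1 by omega]

theorem inv_mul_inv_eq_inv_add_inv_div {K : Type*} [Field K] {x y : K}
    (hx : x ≠ 0) (hy : y ≠ 0) (hxy : x + y ≠ 0) :
    x⁻¹ * y⁻¹ = (x⁻¹ + y⁻¹) / (x + y) := by
  field_simp
  ring

theorem sum_range_inv_add_mul_inv_add_sub {c : ℝ} (hc : 0 < c) (s : ℕ) :
    ∑ j ∈ range (s + 1), ((j : ℝ) + c)⁻¹ * (((s - j : ℕ) : ℝ) + c)⁻¹ =
      2 / (s + 2 * c) * ∑ j ∈ range (s + 1), ((j : ℝ) + c)⁻¹ := by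
  have hpos : ∀ m : ℕ, (m : ℝ) + c ≠ 0 := fun m ↦ by positivity
  have hsplit : ∀ j ∈ range (s + 1), ((j : ℝ) + c)⁻¹ * (((s - j : ℕ) : ℝ) + c)⁻¹ =
      (((j : ℝ) + c)⁻¹ + (((s - j : ℕ) : ℝ) + c)⁻¹) / (s + 2 * c) := by
    intro j hj
    have hsum : (j : ℝ) + c + (((s - j : ℕ) : ℝ) + c) = s + 2 * c := by
      rw [Nat.cast_sub (mem_range_succ_iff.mp hj)]; ring
    rw [inv_mul_inv_eq_inv_add_inv_div (hpos j) (hpos _) (by rw [hsum]; positivity), hsum]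
  have hreflect : ∑ j ∈ range (s + 1), (((s - j : ℕ) : ℝ) + c)⁻¹ =
      ∑ j ∈ range (s + 1), ((j : ℝ) + c)⁻¹ := by
    simpa using sum_range_reflect (fun j ↦ ((j : ℝ) + c)⁻¹) (s + 1)
  rw [sum_congr rfl hsplit, ← sum_div, sum_add_distrib, hreflect]
  ring

/-- **Theorem 1** of the paper:
`∑_{n=0}^{k} 1/(k-n+1/2) · ∑_{m=0}^{n} 1/(m+1/2)
  = 2 ∑_{n=0}^{k} 1/(n+1) · ∑_{m=0}^{n} 1/(m+1/2)`. -/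
theorem arctan_power_theorem1 (k : ℕ) :
    ∑ n ∈ Finset.range (k + 1),
        (1 / ((k : ℝ) - (n : ℝ) + 1 / 2)) *
          ∑ m ∈ Finset.range (n + 1), 1 / ((m : ℝ) + 1 / 2) =
      2 * ∑ n ∈ Finset.range (k + 1),
        (1 / ((n : ℝ) + 1)) *
          ∑ m ∈ Finset.range (n + 1), 1 / ((m : ℝ) + 1 / 2) := by
  have hcast : ∀ n ∈ range (k + 1), (k : ℝ) - n + 1 / 2 = ((k - n : ℕ) : ℝ) + 1 / 2 :=
    fun n hn ↦ by rw [Nat.cast_sub (mem_range_succ_iff.mp hn)]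
  simp only [one_div] at hcast ⊢
  rw [sum_congr rfl fun n hn ↦ by rw [hcast n hn],
    sum_range_reflect_mul_sum_range_eq_sum_diag (fun m ↦ ((m : ℝ) + 2⁻¹)⁻¹), mul_sum]
  refine sum_congr rfl fun s _ ↦ ?_
  rw [sum_range_inv_add_mul_inv_add_sub (by norm_num)]
  ring
end

section
/- For every real number a and every natural number k ≥ 1, ∑_{l=1}^{k} (a + σ_l)/(k-l+1/2) = 2 ∑_{l=1}^{k} (a + σ_l)/l + a·(σ_k − 2 H_k). (Taking a = ψ(1/2), so that a + σ_l = ψ(l+1/2), σ_k = ψ(k+1/2) − ψ(1/2) and H_k = ψ(k+1) − ψ(1), this is the digamma transformation ∑_{l=1}^{k} ψ(l+1/2)/(k-l+1/2) = 2 ∑_{l=1}^{k} ψ(l+1/2)/l + ψ(1/2)[ψ(k+1/2) − ψ(1/2) + 2ψ(1) − 2ψ(k+1)].) -/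
/-- `σ l = ∑_{j=0}^{l-1} 1/(j+1/2)`. -/
noncomputable def sigmaSum (l : ℕ) : ℝ := ∑ j ∈ Finset.range l, 1 / ((j : ℝ) + 1 / 2)

/-- `H k = ∑_{j=1}^{k} 1/j`, the k-th harmonic number. -/
noncomputable def harmonicSum (k : ℕ) : ℝ := ∑ j ∈ Finset.Icc 1 k, 1 / (j : ℝ)

/-!
Reversing the order of summation turns the left side into `a σ_k + ∑_{i<k} σ_{k-i}/(i+1/2)`,
i.e. `a σ_k` plus the sum of `x_i x_j` over `i + j < k`, where `x_i = 1/(i+1/2)`. The diagonal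
`i + j = n` contributes `2 σ_{n+1}/(n+1)`, by the partial fractions
`x_i x_j = (x_i + x_j)/(i+j+1)` and the symmetry `i ↔ n - i`.
-/

open Finset

theorem Finset.sum_Icc_one_eq_sum_range_sub {M : Type*} [AddCommMonoid M] (f : ℕ → M) (k : ℕ) :
    ∑ l ∈ Icc 1 k, f l = ∑ i ∈ range k, f (k - i) := by
  rw [range_eq_Ico, sum_Ico_reflect f 0 (Nat.le_succ k), Nat.add_sub_cancel_left, Nat.sub_zero,
    Ico_add_one_right_eq_Icc]

theorem inv_mul_inv_eq_inv_add_mul_inv_add_inv {K : Type*} [Field K] {x y : K}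
    (hx : x ≠ 0) (hy : y ≠ 0) (hxy : x + y ≠ 0) :
    x⁻¹ * y⁻¹ = (x + y)⁻¹ * (x⁻¹ + y⁻¹) := by
  rw [inv_add_inv hx hy, ← mul_div_assoc, inv_mul_cancel₀ hxy, one_div, mul_inv]

theorem sigmaSum_zero : sigmaSum 0 = 0 := sum_range_zero _

theorem sigmaSum_succ (n : ℕ) : sigmaSum (n + 1) = sigmaSum n + 1 / ((n : ℝ) + 1 / 2) :=
  sum_range_succ _ n

theorem sum_range_succ_half_inv_mul_half_inv (n : ℕ) :
    ∑ i ∈ range (n + 1), 1 / ((i : ℝ) + 1 / 2) * (1 / (((n - i : ℕ) : ℝ) + 1 / 2)) =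
      2 * (sigmaSum (n + 1) / ((n : ℝ) + 1)) := by
  have hterm : ∀ i ∈ range (n + 1), 1 / ((i : ℝ) + 1 / 2) * (1 / (((n - i : ℕ) : ℝ) + 1 / 2)) =
      (1 / ((i : ℝ) + 1 / 2) + 1 / (((n - i : ℕ) : ℝ) + 1 / 2)) / ((n : ℝ) + 1) := by
    intro i hi
    have hsum : (i : ℝ) + 1 / 2 + (((n - i : ℕ) : ℝ) + 1 / 2) = n + 1 := by
      rw [Nat.cast_sub (Nat.lt_succ_iff.mp (mem_range.mp hi))]; ring
    simp only [one_div] at hsum ⊢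
    rw [inv_mul_inv_eq_inv_add_mul_inv_add_inv (by positivity) (by positivity) (by positivity),
      hsum, inv_mul_eq_div]
  have hreflect : ∑ i ∈ range (n + 1), 1 / (((n - i : ℕ) : ℝ) + 1 / 2) = sigmaSum (n + 1) :=
    sum_range_reflect (fun j : ℕ => 1 / ((j : ℝ) + 1 / 2)) (n + 1)
  rw [sum_congr rfl hterm, ← sum_div, sum_add_distrib, hreflect, ← sigmaSum, two_mul, add_div]

theorem sum_range_sigmaSum_sub_div (k : ℕ) :
    ∑ i ∈ range k, sigmaSum (k - i) / ((i : ℝ) + 1 / 2) =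
      2 * ∑ l ∈ Icc 1 k, sigmaSum l / (l : ℝ) := by
  induction k with
  | zero => simp
  | succ n ih =>
    have hstep : ∀ i ∈ range (n + 1), sigmaSum (n + 1 - i) / ((i : ℝ) + 1 / 2) =
        sigmaSum (n - i) / ((i : ℝ) + 1 / 2) +
          1 / ((i : ℝ) + 1 / 2) * (1 / (((n - i : ℕ) : ℝ) + 1 / 2)) := by
      intro i hi
      rw [Nat.sub_add_comm (Nat.lt_succ_iff.mp (mem_range.mp hi)), sigmaSum_succ]
      ring
    rw [sum_congr rfl hstep, sum_add_distrib, sum_range_succ, Nat.sub_self, sigmaSum_zero,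
      zero_div, add_zero, ih, sum_range_succ_half_inv_mul_half_inv, sum_Icc_succ_top (by omega)]
    push_cast
    ring

theorem arctan_power_theorem1_corollary_general (a : ℝ) (k : ℕ) :
    ∑ l ∈ Finset.Icc 1 k, (a + sigmaSum l) / ((k : ℝ) - (l : ℝ) + 1 / 2) =
      2 * ∑ l ∈ Finset.Icc 1 k, (a + sigmaSum l) / (l : ℝ) +
        a * (sigmaSum k - 2 * harmonicSum k) := by
  have hreflect : ∑ l ∈ Icc 1 k, (a + sigmaSum l) / ((k : ℝ) - (l : ℝ) + 1 / 2) =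
      ∑ i ∈ range k, (a + sigmaSum (k - i)) / ((i : ℝ) + 1 / 2) := by
    rw [sum_Icc_one_eq_sum_range_sub]
    refine sum_congr rfl fun i hi => ?_
    rw [Nat.cast_sub (mem_range.mp hi).le, sub_sub_cancel]
  have ha_sigma : ∑ i ∈ range k, a / ((i : ℝ) + 1 / 2) = a * sigmaSum k := by
    simp only [sigmaSum, mul_sum, mul_one_div]
  have ha_harmonic : ∑ l ∈ Icc 1 k, a / (l : ℝ) = a * harmonicSum k := by
    simp only [harmonicSum, mul_sum, mul_one_div]
  rw [hreflect]
  simp only [add_div, sum_add_distrib]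
  rw [ha_sigma, ha_harmonic, sum_range_sigmaSum_sub_div]
  ring

/-- Corollary to **Theorem 1**: for every real `a` and every `k ≥ 1`,
`∑_{l=1}^{k} (a + σ_l)/(k-l+1/2) = 2 ∑_{l=1}^{k} (a + σ_l)/l + a·(σ_k − 2 H_k)`. -/
theorem arctan_power_theorem1_corollary (a : ℝ) (k : ℕ) (hk : 1 ≤ k) :
    ∑ l ∈ Finset.Icc 1 k, (a + sigmaSum l) / ((k : ℝ) - (l : ℝ) + 1 / 2) =
      2 * ∑ l ∈ Finset.Icc 1 k, (a + sigmaSum l) / (l : ℝ) +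
        a * (sigmaSum k - 2 * harmonicSum k) :=
  arctan_power_theorem1_corollary_general a k
end

section
/- For every natural number n ≥ 1 and every natural number k, ∑_{m=0}^{k} t_m(n-1)/(k-m+1/2) = n · ∑_{m=0}^{k} t_m(n-1)/(m+n/2), i.e. the left-hand side equals n · t_k(n). -/
/-- The coefficients `t_k(n)`: `t_k(0) = 1` and
`t_k(n) = ∑_{m=0}^{k} t_m(n-1)/(m + n/2)` for `n ≥ 1`. -/
noncomputable def t : ℕ → ℕ → ℝ
  | _, 0 => 1
  | k, n + 1 => ∑ m ∈ Finset.range (k + 1), t m n / ((m : ℝ) + ((n : ℝ) + 1) / 2)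

/-!
Write `C_n(k) = ∑_{i+j=k} t_i(n)/(j+1/2)`; the claim is `C_n(k) = (n+1) t_k(n+1)`. Both sides
equal `2 t_0(n)` at `k = 0`, so it suffices to compare their increments in `k`. Since
`t_·(n+1)` is the sequence of partial sums of `u_i = t_i(n)/(i+(n+1)/2)`, the increment of
`C_{n+1}` is `∑_{i+j=k} u_i/(j+1/2)`, and the partial fraction
`1/((i+(n+1)/2)(j+1/2)) = (1/(i+(n+1)/2) + 1/(j+1/2))/(k+(n+2)/2)` turns it into
`(t_k(n+1) + C_n(k))/(k+(n+2)/2)`, which the identity for `n` evaluates. For `n = 0` the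
increment is simply `1/(k+1/2)`.
-/

open Finset

lemma t_zero (k : ℕ) : t k 0 = 1 := rfl

lemma t_succ (k n : ℕ) :
    t k (n + 1) = ∑ m ∈ range (k + 1), t m n / ((m : ℝ) + ((n : ℝ) + 1) / 2) := rfl

lemma t_succ_eq_sum_antidiagonal (k n : ℕ) :
    t k (n + 1) = ∑ p ∈ antidiagonal k, t p.1 n / ((p.1 : ℝ) + ((n : ℝ) + 1) / 2) := by
  rw [t_succ,
    Nat.sum_antidiagonal_eq_sum_range_succ (fun i _ => t i n / ((i : ℝ) + ((n : ℝ) + 1) / 2))]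

lemma t_succ_succ (k n : ℕ) :
    t (k + 1) (n + 1) =
      t k (n + 1) + t (k + 1) n / (((k + 1 : ℕ) : ℝ) + ((n : ℝ) + 1) / 2) := by
  rw [t_succ (k + 1), sum_range_succ, ← t_succ]

lemma sum_antidiagonal_partialSum_mul_succ {R : Type*} [NonUnitalNonAssocSemiring R]
    (f g : ℕ → R) (k : ℕ) :
    ∑ p ∈ antidiagonal (k + 1), (∑ i ∈ range (p.1 + 1), f i) * g p.2 =
      ∑ p ∈ antidiagonal k, (∑ i ∈ range (p.1 + 1), f i) * g p.2 +
        ∑ p ∈ antidiagonal (k + 1), f p.1 * g p.2 := by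
  have split_last (p : ℕ × ℕ) : (∑ i ∈ range (p.1 + 1 + 1), f i) * g p.2 =
      (∑ i ∈ range (p.1 + 1), f i) * g p.2 + f (p.1 + 1) * g p.2 := by
    rw [sum_range_succ, add_mul]
  rw [Nat.sum_antidiagonal_succ, Nat.sum_antidiagonal_succ, sum_range_one]
  simp only [split_last, sum_add_distrib]
  abel

noncomputable def convHalf (u : ℕ → ℝ) (k : ℕ) : ℝ :=
  ∑ p ∈ antidiagonal k, u p.1 * ((p.2 : ℝ) + 1 / 2)⁻¹

lemma sum_range_div_sub_add_half_eq_convHalf (u : ℕ → ℝ) (k : ℕ) :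
    ∑ m ∈ range (k + 1), u m / ((k : ℝ) - (m : ℝ) + 1 / 2) = convHalf u k := by
  rw [convHalf, Nat.sum_antidiagonal_eq_sum_range_succ (fun i j => u i * ((j : ℝ) + 1 / 2)⁻¹)]
  refine sum_congr rfl fun m hm => ?_
  rw [Nat.cast_sub (Nat.lt_succ_iff.mp (mem_range.mp hm)), div_eq_mul_inv]

lemma convHalf_t_eq_of_succ (n : ℕ)
    (hstep : ∀ k, convHalf (t · n) (k + 1) = convHalf (t · n) k +
      ((n : ℝ) + 1) * t (k + 1) n / (((k + 1 : ℕ) : ℝ) + ((n : ℝ) + 1) / 2)) (k : ℕ) :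
    convHalf (t · n) k = ((n : ℝ) + 1) * t k (n + 1) := by
  induction k with
  | zero =>
    rw [convHalf, Nat.antidiagonal_zero, sum_singleton, t_succ, sum_range_one]
    push_cast
    field_simp
    ring
  | succ k ih => rw [hstep, ih, t_succ_succ]; ring

lemma convHalf_t_zero_succ (k : ℕ) :
    convHalf (t · 0) (k + 1) = convHalf (t · 0) k + (((k + 1 : ℕ) : ℝ) + 1 / 2)⁻¹ := by
  simp only [convHalf, Nat.sum_antidiagonal_succ, t_zero, one_mul]
  ring

lemma sum_antidiagonal_t_div_mul_inv (q K : ℕ)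
    (hq : convHalf (t · q) K = ((q : ℝ) + 1) * t K (q + 1)) :
    ∑ p ∈ antidiagonal K,
        t p.1 q / ((p.1 : ℝ) + ((q : ℝ) + 1) / 2) * ((p.2 : ℝ) + 1 / 2)⁻¹ =
      ((q : ℝ) + 2) * t K (q + 1) / ((K : ℝ) + ((q : ℝ) + 2) / 2) := by
  have partial_fraction : ∀ p ∈ antidiagonal K,
      t p.1 q / ((p.1 : ℝ) + ((q : ℝ) + 1) / 2) * ((p.2 : ℝ) + 1 / 2)⁻¹ =
        (t p.1 q / ((p.1 : ℝ) + ((q : ℝ) + 1) / 2) + t p.1 q * ((p.2 : ℝ) + 1 / 2)⁻¹) /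
          ((K : ℝ) + ((q : ℝ) + 2) / 2) := by
    intro p hp
    have hK : (p.1 : ℝ) + p.2 = K := by exact_mod_cast mem_antidiagonal.mp hp
    rw [← hK]
    field_simp
    ring
  simp only [convHalf] at hq
  rw [sum_congr rfl partial_fraction, ← sum_div, sum_add_distrib, ← t_succ_eq_sum_antidiagonal,
    hq]
  ring

lemma convHalf_t_succ_succ (q k : ℕ)
    (hq : convHalf (t · q) (k + 1) = ((q : ℝ) + 1) * t (k + 1) (q + 1)) :
    convHalf (t · (q + 1)) (k + 1) = convHalf (t · (q + 1)) k +
      ((q : ℝ) + 2) * t (k + 1) (q + 1) / (((k + 1 : ℕ) : ℝ) + ((q : ℝ) + 2) / 2) := by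
  have partial_sums : (t · (q + 1)) =
      fun m => ∑ i ∈ range (m + 1), t i q / ((i : ℝ) + ((q : ℝ) + 1) / 2) :=
    funext fun m => t_succ m q
  rw [partial_sums, convHalf, convHalf,
    sum_antidiagonal_partialSum_mul_succ (fun i => t i q / ((i : ℝ) + ((q : ℝ) + 1) / 2))
      (fun j => ((j : ℝ) + 1 / 2)⁻¹),
    sum_antidiagonal_t_div_mul_inv q (k + 1) hq]

theorem convHalf_t (n k : ℕ) : convHalf (t · n) k = ((n : ℝ) + 1) * t k (n + 1) := by
  induction n generalizing k with
  | zero =>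
    refine convHalf_t_eq_of_succ 0 (fun k => ?_) k
    rw [convHalf_t_zero_succ, t_zero]
    push_cast
    ring
  | succ q ih =>
    refine convHalf_t_eq_of_succ (q + 1) (fun k => ?_) k
    rw [convHalf_t_succ_succ q k (ih (k + 1))]
    push_cast
    ring

/-- **Theorem 2** of the paper: for `n ≥ 1` and every `k`,
`∑_{m=0}^{k} t_m(n-1)/(k-m+1/2) = n · ∑_{m=0}^{k} t_m(n-1)/(m+n/2)`. -/
theorem arctan_power_theorem2 (n : ℕ) (hn : 1 ≤ n) (k : ℕ) :
    ∑ m ∈ Finset.range (k + 1), t m (n - 1) / ((k : ℝ) - (m : ℝ) + 1 / 2) =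
      (n : ℝ) * ∑ m ∈ Finset.range (k + 1), t m (n - 1) / ((m : ℝ) + (n : ℝ) / 2) := by
  obtain ⟨q, rfl⟩ := Nat.exists_eq_add_of_le' hn
  rw [Nat.add_sub_cancel, sum_range_div_sub_add_half_eq_convHalf, convHalf_t, t_succ]
  push_cast
  rfl
end

section
/- For every natural number n ≥ 1 and every real number x with 0 < |x| < 1, the series ∑_{m=0}^{∞} (−x²)^m · t_m(n-1)/(m + n/2) converges, with sum (2^n / n!) · (arctan(x)/x)^n; equivalently, (arctan(x)/x)^n = (n!/2^n) · ∑_{m=0}^{∞} (−x²)^m · t_m(n-1)/(m + n/2). -/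
open Real Finset Metric
open scoped Nat

theorem hasSum_of_hasDerivAt_of_isPreconnected {𝕜 F : Type*} [RCLike 𝕜] [NormedAddCommGroup F]
    [NormedSpace 𝕜 F] [CompleteSpace F] {g g' : ℕ → 𝕜 → F} {G : 𝕜 → F} {u : ℕ → ℝ}
    {s : Set 𝕜} {y₀ x : 𝕜} (hu : Summable u) (hs : IsOpen s) (hs' : IsPreconnected s)
    (hg : ∀ k, ∀ y ∈ s, HasDerivAt (g k) (g' k y) y) (hg' : ∀ k, ∀ y ∈ s, ‖g' k y‖ ≤ u k)
    (hG : ∀ y ∈ s, HasDerivAt G (∑' k, g' k y) y) (hy₀ : y₀ ∈ s)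
    (h₀ : HasSum (fun k => g k y₀) (G y₀)) (hx : x ∈ s) :
    HasSum (fun k => g k x) (G x) := by
  have hsum (y) (hy : y ∈ s) : HasDerivAt (fun z => ∑' k, g k z) (∑' k, g' k y) y :=
    hasDerivAt_tsum_of_isPreconnected hu hs hs' hg hg' hy₀ h₀.summable hy
  have heq : s.EqOn (fun z => ∑' k, g k z) G :=
    hs.eqOn_of_deriv_eq hs' (fun y hy => (hsum y hy).differentiableAt.differentiableWithinAt)
      (fun y hy => (hG y hy).differentiableAt.differentiableWithinAt)
      (fun y hy => (hsum y hy).deriv.trans (hG y hy).deriv.symm) hy₀ h₀.tsum_eq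
  exact heq hx ▸ (summable_of_summable_hasDerivAt_of_isPreconnected hu hs hs' hg hg' hy₀
    h₀.summable hx).hasSum

theorem hasDerivAt_neg_sq_pow_mul_pow {𝕜 : Type*} [NontriviallyNormedField 𝕜] (k n : ℕ) (y : 𝕜) :
    HasDerivAt (fun z => (-z ^ 2) ^ k * z ^ (n + 1))
      ((2 * k + n + 1) * ((-y ^ 2) ^ k * y ^ n)) y := by
  have h : (fun z : 𝕜 => (-z ^ 2) ^ k * z ^ (n + 1)) = fun z => (-1) ^ k * z ^ (2 * k + n + 1) := by
    funext z; ring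
  rw [h]
  refine ((hasDerivAt_pow (2 * k + n + 1) y).const_mul ((-1 : 𝕜) ^ k)).congr_deriv ?_
  rw [Nat.add_sub_cancel]
  push_cast
  ring

theorem t_nonneg : ∀ k n, 0 ≤ t k n
  | _, 0 => zero_le_one
  | _, n + 1 => sum_nonneg fun m _ => div_nonneg (t_nonneg m n) (by positivity)

theorem t_succ_mul_pow (k n : ℕ) (a : ℝ) :
    t k (n + 1) * a ^ k =
      ∑ m ∈ range (k + 1), t m n * a ^ m / ((m : ℝ) + ((n : ℝ) + 1) / 2) * a ^ (k - m) := by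
  rw [t, sum_mul]
  refine sum_congr rfl fun m hm => ?_
  rw [mul_div_right_comm, mul_assoc, ← pow_add, Nat.add_sub_cancel' (mem_range_succ_iff.1 hm)]

theorem summable_norm_t_mul_pow_div {n : ℕ} {a : ℝ} (h : Summable fun k => ‖t k n * a ^ k‖) :
    Summable fun k => ‖t k n * a ^ k / ((k : ℝ) + ((n : ℝ) + 1) / 2)‖ := by
  refine .of_nonneg_of_le (fun _ => norm_nonneg _) (fun k => ?_) (h.mul_left 2)
  have hd : (1 : ℝ) / 2 ≤ (k : ℝ) + ((n : ℝ) + 1) / 2 := by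
    have : (0 : ℝ) ≤ k := k.cast_nonneg
    have : (0 : ℝ) ≤ n := n.cast_nonneg
    linarith
  have hd' : ‖(k : ℝ) + ((n : ℝ) + 1) / 2‖ = (k : ℝ) + ((n : ℝ) + 1) / 2 :=
    Real.norm_of_nonneg (by positivity)
  rw [norm_div, hd', div_le_iff₀ (by positivity)]
  nlinarith [norm_nonneg (t k n * a ^ k)]

theorem summable_norm_t_mul_pow {a : ℝ} (ha : ‖a‖ < 1) :
    ∀ n, Summable fun k => ‖t k n * a ^ k‖
  | 0 => by simpa [t] using summable_geometric_of_lt_one (norm_nonneg a) ha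
  | n + 1 => by
    simp_rw [t_succ_mul_pow]
    exact summable_norm_sum_mul_range_of_summable_norm
      (summable_norm_t_mul_pow_div (summable_norm_t_mul_pow ha n))
      (by simpa using summable_geometric_of_lt_one (norm_nonneg a) ha)

theorem norm_neg_sq_lt_one {x : ℝ} (hx : |x| < 1) : ‖-x ^ 2‖ < 1 := by
  rw [norm_neg, norm_pow, Real.norm_eq_abs]
  exact pow_lt_one₀ (abs_nonneg x) hx two_ne_zero

theorem hasSum_t_succ_mul_neg_sq_pow {n : ℕ} {x : ℝ} (hx : |x| < 1) {S : ℝ}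
    (h : HasSum (fun k => t k n * (-x ^ 2) ^ k / ((k : ℝ) + ((n : ℝ) + 1) / 2) * x ^ (n + 1)) S) :
    HasSum (fun k => t k (n + 1) * (-x ^ 2) ^ k * x ^ (n + 1)) (S / (1 + x ^ 2)) := by
  have hx2 := norm_neg_sq_lt_one hx
  have hf : Summable fun k =>
      ‖t k n * (-x ^ 2) ^ k / ((k : ℝ) + ((n : ℝ) + 1) / 2) * x ^ (n + 1)‖ := by
    simpa only [norm_mul] using
      (summable_norm_t_mul_pow_div (summable_norm_t_mul_pow hx2 n)).mul_right ‖x ^ (n + 1)‖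
  have hg : Summable fun k => ‖(-x ^ 2) ^ k‖ := by
    simpa using summable_geometric_of_lt_one (norm_nonneg _) hx2
  have H := hasSum_sum_range_mul_of_summable_norm hf hg
  rw [h.tsum_eq, (hasSum_geometric_of_norm_lt_one hx2).tsum_eq, sub_neg_eq_add, ← div_eq_mul_inv]
    at H
  refine H.congr_fun fun k => ?_
  rw [t_succ_mul_pow, sum_mul]
  exact sum_congr rfl fun m _ => by ring

theorem hasSum_t_div_mul_neg_sq_pow (n : ℕ)
    (h : ∀ y : ℝ, |y| < 1 → HasSum (fun k => t k n * (-y ^ 2) ^ k * y ^ n)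
      (2 ^ n / n ! * arctan y ^ n / (1 + y ^ 2)))
    {x : ℝ} (hx : |x| < 1) :
    HasSum (fun k => t k n * (-x ^ 2) ^ k / ((k : ℝ) + ((n : ℝ) + 1) / 2) * x ^ (n + 1))
      (2 ^ (n + 1) / (n + 1)! * arctan x ^ (n + 1)) := by
  obtain ⟨r, hxr, hr⟩ := exists_between hx
  have hr0 : 0 < r := (abs_nonneg x).trans_lt hxr
  refine hasSum_of_hasDerivAt_of_isPreconnected (s := ball 0 r) (y₀ := 0)
    (g := fun k y => t k n * (-y ^ 2) ^ k / ((k : ℝ) + ((n : ℝ) + 1) / 2) * y ^ (n + 1))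
    (G := fun y => 2 ^ (n + 1) / (n + 1)! * arctan y ^ (n + 1))
    (g' := fun k y => 2 * (t k n * (-y ^ 2) ^ k * y ^ n))
    (u := fun k => 2 * (‖t k n * (r ^ 2) ^ k‖ * r ^ n)) ?_ isOpen_ball
    (convex_ball 0 r).isPreconnected (fun k y _ => ?_) (fun k y hy => ?_) (fun y hy => ?_)
    (mem_ball_self hr0) ?_ (by rwa [mem_ball, dist_zero_right, Real.norm_eq_abs])
  · refine ((summable_norm_t_mul_pow ?_ n).mul_right _).mul_left 2
    rw [norm_pow, Real.norm_of_nonneg hr0.le]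
    exact pow_lt_one₀ hr0.le hr two_ne_zero
  · have hd : (k : ℝ) + ((n : ℝ) + 1) / 2 ≠ 0 := by positivity
    have hderiv := (hasDerivAt_neg_sq_pow_mul_pow k n y).const_mul
      (t k n / ((k : ℝ) + ((n : ℝ) + 1) / 2))
    refine (hderiv.congr_deriv ?_).congr_of_eventuallyEq (.of_forall fun z => ?_)
    · field_simp
      ring
    · ring
  · rw [mem_ball, dist_zero_right] at hy
    simp only [norm_mul, norm_pow, norm_neg, Real.norm_ofNat, Real.norm_of_nonneg hr0.le]
    gcongr
  · have hy1 : |y| < 1 := by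
      rw [← Real.norm_eq_abs]
      exact (mem_ball_zero_iff.1 hy).trans hr
    rw [((h y hy1).mul_left 2).tsum_eq]
    refine (((hasDerivAt_arctan y).pow (n + 1)).const_mul _).congr_deriv ?_
    rw [Nat.add_sub_cancel, Nat.factorial_succ]
    push_cast
    field_simp
    ring
  · simp

theorem hasSum_t_mul_neg_sq_pow :
    ∀ (n : ℕ) {x : ℝ}, |x| < 1 → HasSum (fun k => t k n * (-x ^ 2) ^ k * x ^ n)
      (2 ^ n / n ! * arctan x ^ n / (1 + x ^ 2))
  | 0, x, hx => by
    simpa [t, div_eq_mul_inv] using hasSum_geometric_of_norm_lt_one (norm_neg_sq_lt_one hx)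
  | n + 1, x, hx =>
    hasSum_t_succ_mul_neg_sq_pow hx
      (hasSum_t_div_mul_neg_sq_pow n (fun _ => hasSum_t_mul_neg_sq_pow n) hx)

/-- **Theorem 3** of the paper: for `n ≥ 1` and `0 < |x| < 1`, the series
`∑_{m=0}^{∞} (−x²)^m · t_m(n-1)/(m + n/2)` converges with sum
`(2^n / n!) · (arctan(x)/x)^n`; equivalently
`(arctan(x)/x)^n = (n!/2^n) · ∑_{m=0}^{∞} (−x²)^m · t_m(n-1)/(m + n/2)`. -/
theorem arctan_power_theorem3 (n : ℕ) (hn : 1 ≤ n) (x : ℝ)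
    (hx0 : 0 < |x|) (hx1 : |x| < 1) :
    HasSum (fun m : ℕ => (-x ^ 2) ^ m * t m (n - 1) / ((m : ℝ) + (n : ℝ) / 2))
      ((2 ^ n / (Nat.factorial n : ℝ)) * (Real.arctan x / x) ^ n) := by
  obtain ⟨n, rfl⟩ := Nat.exists_eq_add_of_le' hn
  have hx : x ^ (n + 1) ≠ 0 := pow_ne_zero _ (abs_pos.1 hx0)
  rw [Nat.add_sub_cancel, div_pow, ← mul_div_assoc]
  refine ((hasSum_t_div_mul_neg_sq_pow n (fun _ => hasSum_t_mul_neg_sq_pow n) hx1).div_const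
    (x ^ (n + 1))).congr_fun fun m => ?_
  rw [mul_div_cancel_right₀ _ hx]
  push_cast
  ring
end

section
/- For every natural number n ≥ 1 and every real number x with |x| < 1, the series ∑_{m=0}^{∞} x^m/(m+1/2) and ∑_{k=0}^{∞} x^k · t_k(n-1)/(k+n/2) both converge, and (∑_{m=0}^{∞} x^m/(m+1/2))^n = n! · ∑_{k=0}^{∞} x^k · t_k(n-1)/(k+n/2). -/
namespace PowerSeries

section Euler

open Finset

variable {R : Type*}

-- The shifted Euler operator `X d/dX + s`.
noncomputable def eulerOp [Semiring R] (s : R) (f : R⟦X⟧) : R⟦X⟧ :=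
  mk fun k => ((k : R) + s) * coeff k f

theorem coeff_eulerOp [Semiring R] (s : R) (f : R⟦X⟧) (k : ℕ) :
    coeff k (eulerOp s f) = ((k : R) + s) * coeff k f :=
  coeff_mk _ _

theorem eulerOp_mul [CommSemiring R] (s₁ s₂ : R) (f g : R⟦X⟧) :
    eulerOp (s₁ + s₂) (f * g) = eulerOp s₁ f * g + f * eulerOp s₂ g := by
  ext k
  simp only [coeff_eulerOp, map_add, coeff_mul, mul_sum, ← sum_add_distrib]
  refine sum_congr rfl fun p hp => ?_
  rw [← mem_antidiagonal.mp hp]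
  push_cast
  ring

theorem eulerOp_smul [CommSemiring R] (s c : R) (f : R⟦X⟧) :
    eulerOp s (c • f) = c • eulerOp s f := by
  ext k
  simp only [coeff_eulerOp, coeff_smul, smul_eq_mul]
  ring

theorem eulerOp_injective [CommRing R] [NoZeroDivisors R] {s : R}
    (hs : ∀ k : ℕ, (k : R) + s ≠ 0) : Function.Injective (eulerOp s) := fun f g h => by
  ext k
  exact mul_left_cancel₀ (hs k) (by simpa only [coeff_eulerOp] using congr_arg (coeff k) h)

end Euler

section Evaluation

open Finset

variable {R : Type*} [NormedCommRing R] {x : R} {f g : R⟦X⟧}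

theorem pow_mul_coeff_mul (x : R) (f g : R⟦X⟧) (k : ℕ) :
    x ^ k * coeff k (f * g) =
      ∑ p ∈ antidiagonal k, (x ^ p.1 * coeff p.1 f) * (x ^ p.2 * coeff p.2 g) := by
  rw [coeff_mul, mul_sum]
  refine sum_congr rfl fun p hp => ?_
  rw [← mem_antidiagonal.mp hp, pow_add]
  ring

theorem summable_norm_pow_mul_coeff_mul (hf : Summable fun k => ‖x ^ k * coeff k f‖)
    (hg : Summable fun k => ‖x ^ k * coeff k g‖) :
    Summable fun k => ‖x ^ k * coeff k (f * g)‖ := by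
  simpa only [pow_mul_coeff_mul] using summable_norm_sum_mul_antidiagonal_of_summable_norm hf hg

theorem tsum_pow_mul_coeff_mul [CompleteSpace R] (hf : Summable fun k => ‖x ^ k * coeff k f‖)
    (hg : Summable fun k => ‖x ^ k * coeff k g‖) :
    ∑' k, x ^ k * coeff k (f * g) = (∑' k, x ^ k * coeff k f) * ∑' k, x ^ k * coeff k g := by
  simpa only [pow_mul_coeff_mul] using
    (tsum_mul_tsum_eq_tsum_sum_antidiagonal_of_summable_norm hf hg).symm

end Evaluation

end PowerSeries

open PowerSeries
open scoped Nat

noncomputable def halfSeries : ℝ⟦X⟧ := mk fun k => 1 / ((k : ℝ) + 1 / 2)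

noncomputable def tSeries (n : ℕ) : ℝ⟦X⟧ := mk fun k => t k n

noncomputable def tDivSeries (n : ℕ) : ℝ⟦X⟧ :=
  mk fun k => t k n / ((k : ℝ) + ((n : ℝ) + 1) / 2)

theorem tSeries_zero : tSeries 0 = mk 1 := rfl

theorem tDivSeries_zero : tDivSeries 0 = halfSeries := by
  ext k
  simp [tDivSeries, halfSeries, t]

theorem tSeries_succ (n : ℕ) : tSeries (n + 1) = tDivSeries n * mk 1 := by
  ext k
  simp [tSeries, tDivSeries, t, coeff_mul, Finset.Nat.sum_antidiagonal_eq_sum_range_succ_mk]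

theorem eulerOp_halfSeries : eulerOp (1 / 2) halfSeries = mk 1 := by
  ext k
  simp only [coeff_eulerOp, halfSeries, coeff_mk, Pi.one_apply]
  field_simp

theorem eulerOp_tDivSeries (n : ℕ) :
    eulerOp (((n : ℝ) + 1) / 2) (tDivSeries n) = tSeries n := by
  ext k
  simp only [coeff_eulerOp, tDivSeries, tSeries, coeff_mk]
  field_simp

theorem halfSeries_mul_tDivSeries_of_mul_tSeries {n : ℕ}
    (h : halfSeries * tSeries n = ((n : ℝ) + 1) • tSeries (n + 1)) :
    halfSeries * tDivSeries n = ((n : ℝ) + 2) • tDivSeries (n + 1) := by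
  refine eulerOp_injective (s := ((n : ℝ) + 2) / 2) (fun k => by positivity) ?_
  have hs : ((n : ℝ) + 2) / 2 = 1 / 2 + ((n : ℝ) + 1) / 2 := by ring
  have hs' : ((n : ℝ) + 2) / 2 = (((n + 1 : ℕ) : ℝ) + 1) / 2 := by push_cast; ring
  calc eulerOp _ (halfSeries * tDivSeries n) = mk 1 * tDivSeries n + halfSeries * tSeries n := by
        rw [hs, eulerOp_mul, eulerOp_halfSeries, eulerOp_tDivSeries]
    _ = ((n : ℝ) + 2) • tSeries (n + 1) := by
        rw [h, mul_comm, ← tSeries_succ]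
        module
    _ = eulerOp _ (((n : ℝ) + 2) • tDivSeries (n + 1)) := by
        rw [eulerOp_smul, hs', eulerOp_tDivSeries]

theorem halfSeries_mul_tSeries (n : ℕ) :
    halfSeries * tSeries n = ((n : ℝ) + 1) • tSeries (n + 1) := by
  induction n with
  | zero => simp [tSeries_zero, tSeries_succ, tDivSeries_zero]
  | succ n ih =>
    rw [tSeries_succ, ← mul_assoc, halfSeries_mul_tDivSeries_of_mul_tSeries ih, smul_mul_assoc,
      ← tSeries_succ]
    congr 1
    push_cast
    ring

theorem halfSeries_mul_tDivSeries (n : ℕ) :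
    halfSeries * tDivSeries n = ((n : ℝ) + 2) • tDivSeries (n + 1) :=
  halfSeries_mul_tDivSeries_of_mul_tSeries (halfSeries_mul_tSeries n)

theorem summable_norm_pow_mul_coeff_halfSeries {x : ℝ} (hx : |x| < 1) :
    Summable fun k => ‖x ^ k * coeff k halfSeries‖ := by
  refine Summable.of_nonneg_of_le (fun _ => norm_nonneg _) (fun k => ?_)
    ((summable_geometric_of_lt_one (abs_nonneg x) hx).mul_right 2)
  have hk : (0 : ℝ) < k + 1 / 2 := by positivity
  rw [halfSeries, coeff_mk, norm_mul, norm_pow, Real.norm_eq_abs, Real.norm_eq_abs,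
    abs_of_pos (one_div_pos.mpr hk)]
  gcongr
  rw [div_le_iff₀ hk]
  linarith [(k.cast_nonneg : (0 : ℝ) ≤ k)]

theorem summable_tDivSeries_and_pow_tsum_halfSeries_eq {x : ℝ} (hx : |x| < 1) (n : ℕ) :
    Summable (fun k => ‖x ^ k * coeff k (tDivSeries n)‖) ∧
      (∑' k, x ^ k * coeff k halfSeries) ^ (n + 1) =
        (n + 1)! * ∑' k, x ^ k * coeff k (tDivSeries n) := by
  have hH := summable_norm_pow_mul_coeff_halfSeries hx
  induction n with
  | zero => exact ⟨by rwa [tDivSeries_zero], by simp [tDivSeries_zero]⟩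
  | succ n ih =>
    obtain ⟨hC, hpow⟩ := ih
    have hcoeff : ∀ k, x ^ k * coeff k (tDivSeries (n + 1)) =
        ((n : ℝ) + 2)⁻¹ * (x ^ k * coeff k (halfSeries * tDivSeries n)) := by
      intro k
      rw [halfSeries_mul_tDivSeries, coeff_smul, smul_eq_mul]
      field_simp
    refine ⟨?_, ?_⟩
    · exact ((summable_norm_pow_mul_coeff_mul hH hC).mul_left ‖((n : ℝ) + 2)⁻¹‖).congr
        fun k => by rw [hcoeff, norm_mul ((n : ℝ) + 2)⁻¹]
    · rw [pow_succ, hpow, mul_assoc, mul_comm (∑' _, _), ← tsum_pow_mul_coeff_mul hH hC]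
      simp_rw [hcoeff, tsum_mul_left, Nat.factorial_succ (n + 1)]
      push_cast
      field_simp
      ring

/-- Corollary to **Theorem 3**: for `n ≥ 1` and `|x| < 1`, the series
`∑_{m=0}^{∞} x^m/(m+1/2)` and `∑_{k=0}^{∞} x^k · t_k(n-1)/(k+n/2)` both converge,
and `(∑_{m=0}^{∞} x^m/(m+1/2))^n = n! · ∑_{k=0}^{∞} x^k · t_k(n-1)/(k+n/2)`. -/
theorem arctan_power_theorem3_corollary (n : ℕ) (hn : 1 ≤ n) (x : ℝ) (hx : |x| < 1) :
    Summable (fun m : ℕ => x ^ m / ((m : ℝ) + 1 / 2)) ∧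
      Summable (fun k : ℕ => x ^ k * t k (n - 1) / ((k : ℝ) + (n : ℝ) / 2)) ∧
      (∑' m : ℕ, x ^ m / ((m : ℝ) + 1 / 2)) ^ n =
        (Nat.factorial n : ℝ) *
          ∑' k : ℕ, x ^ k * t k (n - 1) / ((k : ℝ) + (n : ℝ) / 2) := by
  obtain ⟨N, rfl⟩ : ∃ N, n = N + 1 := ⟨n - 1, by omega⟩
  have hH : (fun m : ℕ => x ^ m / ((m : ℝ) + 1 / 2)) = fun m => x ^ m * coeff m halfSeries := by
    ext m
    rw [halfSeries, coeff_mk, mul_one_div]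
  have hC : (fun k : ℕ => x ^ k * t k (N + 1 - 1) / ((k : ℝ) + ((N + 1 : ℕ) : ℝ) / 2)) =
      fun k => x ^ k * coeff k (tDivSeries N) := by
    ext k
    rw [tDivSeries, coeff_mk, Nat.add_sub_cancel, mul_div_assoc]
    push_cast
    rfl
  obtain ⟨hsum, hpow⟩ := summable_tDivSeries_and_pow_tsum_halfSeries_eq hx N
  rw [hH, hC]
  exact ⟨(summable_norm_pow_mul_coeff_halfSeries hx).of_norm, hsum.of_norm, mod_cast hpow⟩
end

section
/- For every natural number n ≥ 2 and every real number x ≠ 0, writing T(j,x) := (arctan(x)/x)^j, one has (x²/n) · (d²/dx²) T(n,x) = (n+1)·T(n,x) − (2(n + (n+1)x²)/(1+x²)²)·T(n-1,x) + ((n-1)/(1+x²)²)·T(n-2,x), where the second derivative is taken at the point x of the function y ↦ (arctan(y)/y)^n. -/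
/-!
Write `u y = arctan y / y`. Differentiating `y * u y = arctan y` gives `y u' = 1/(1+y²) - u`, and
differentiating once more gives `y u'' = -2y/(1+y²)² - 2u'`. Substituting both into
`(uⁿ)'' = n(n-1) u^(n-2) u'² + n u^(n-1) u''` and multiplying by `y²/n` leaves a rational identity in
`y` and `u`.
-/

open Real Filter Topology

theorem iteratedDeriv_two_fun_pow {𝕜 : Type*} [NontriviallyNormedField 𝕜] {f f' : 𝕜 → 𝕜}
    {f'' x : 𝕜} (n : ℕ) (hf : ∀ᶠ y in 𝓝 x, HasDerivAt f (f' y) y) (hf' : HasDerivAt f' f'' x) :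
    iteratedDeriv 2 (fun y => f y ^ n) x =
      n * ((n - 1 : ℕ) * f x ^ (n - 2) * f' x ^ 2 + f x ^ (n - 1) * f'') := by
  have hderiv : deriv (fun y => f y ^ n) =ᶠ[𝓝 x] fun y => n * f y ^ (n - 1) * f' y :=
    hf.mono fun y hy => (hy.fun_pow n).deriv
  rw [iteratedDeriv_succ, iteratedDeriv_one, hderiv.deriv_eq,
    (((hf.self_of_nhds.fun_pow (n - 1)).const_mul (n : 𝕜)).fun_mul hf').deriv, Nat.sub_sub]
  ring

theorem hasDerivAt_arctan_div {y : ℝ} (hy : y ≠ 0) :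
    HasDerivAt (fun z => arctan z / z) (((1 + y ^ 2)⁻¹ - arctan y / y) / y) y := by
  refine ((hasDerivAt_arctan y).div (hasDerivAt_id y) hy).congr_deriv ?_
  simp only [id]
  field_simp

theorem hasDerivAt_arctan_div_deriv {y : ℝ} (hy : y ≠ 0) :
    HasDerivAt (fun z => ((1 + z ^ 2)⁻¹ - arctan z / z) / z)
      ((-2 * y / (1 + y ^ 2) ^ 2 - 2 * (((1 + y ^ 2)⁻¹ - arctan y / y) / y)) / y) y := by
  have hinv := ((hasDerivAt_pow 2 y).const_add 1).fun_inv (by positivity)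
  refine (((hinv.fun_sub (hasDerivAt_arctan_div hy)).fun_div (hasDerivAt_id y) hy)).congr_deriv ?_
  simp only [id]
  field_simp
  ring

/-- Equation (21) of the paper: with `T(j,x) = (arctan(x)/x)^j`, for `n ≥ 2` and `x ≠ 0`,
`(x²/n)·T''(n,x) = (n+1)·T(n,x) − (2(n+(n+1)x²)/(1+x²)²)·T(n-1,x)
  + ((n-1)/(1+x²)²)·T(n-2,x)`. -/
theorem arctan_power_ode (n : ℕ) (hn : 2 ≤ n) (x : ℝ) (hx : x ≠ 0)
    (T : ℕ → ℝ → ℝ) (hT : ∀ (j : ℕ) (y : ℝ), T j y = (Real.arctan y / y) ^ j) :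
    (x ^ 2 / (n : ℝ)) * iteratedDeriv 2 (T n) x =
      ((n : ℝ) + 1) * T n x -
        (2 * ((n : ℝ) + ((n : ℝ) + 1) * x ^ 2) / (1 + x ^ 2) ^ 2) * T (n - 1) x +
        (((n : ℝ) - 1) / (1 + x ^ 2) ^ 2) * T (n - 2) x := by
  obtain ⟨m, rfl⟩ : ∃ m, n = m + 2 := ⟨n - 2, by omega⟩
  have hderiv : ∀ᶠ y in 𝓝 x,
      HasDerivAt (fun z => arctan z / z) (((1 + y ^ 2)⁻¹ - arctan y / y) / y) y :=
    (eventually_ne_nhds hx).mono fun y hy => hasDerivAt_arctan_div hy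
  rw [show T (m + 2) = fun y => (arctan y / y) ^ (m + 2) from funext (hT _),
    iteratedDeriv_two_fun_pow _ hderiv (hasDerivAt_arctan_div_deriv hx)]
  simp only [hT, Nat.add_sub_cancel]
  generalize arctan x / x = u
  push_cast
  field_simp
  ring
end
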